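/- arXiv:1202.3964 — 4 statements merged into one kernel-verified Lean document; each statement's English description precedes it below -/
import Mathlib

section
/- Let (𝒱, ω₁, …, ω_k) be a k-symplectic vector space and let W be a k-lagrangian linear subspace of 𝒱. Then W = W^{⊥,k}. -/
open Module

/-- The `l`-th orthogonal complement of a subspace `W` of `𝒱` with respect to the family of
bilinear forms `ω = (ω₁, …, ω_k)` (here 0-indexed: index `r` with `(r : ℕ) < l` corresponds
to `ω₁, …, ω_l`): the set of `v ∈ 𝒱` with `ω r v w = 0` for all `w ∈ W` and all `r < l`. -/
def lOrth {k : ℕ} {𝒱 : Type*} [AddCommGroup 𝒱] [Module ℝ 𝒱]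
    (ω : Fin k → 𝒱 →ₗ[ℝ] 𝒱 →ₗ[ℝ] ℝ) (l : ℕ) (W : Submodule ℝ 𝒱) : Submodule ℝ 𝒱 where
  carrier := {v | ∀ r : Fin k, (r : ℕ) < l → ∀ w ∈ W, ω r v w = 0}
  add_mem' := by
    intro a b ha hb r hr w hw
    simp [map_add, ha r hr w hw, hb r hr w hw]
  zero_mem' := by
    intro r hr w hw
    simp
  smul_mem' := by
    intro c a ha r hr w hw
    simp [map_smul, ha r hr w hw]

/-- A subspace `W` is `l`-isotropic if `W ⊆ W^{⊥,l}`. -/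
def IsIsotropic {k : ℕ} {𝒱 : Type*} [AddCommGroup 𝒱] [Module ℝ 𝒱]
    (ω : Fin k → 𝒱 →ₗ[ℝ] 𝒱 →ₗ[ℝ] ℝ) (l : ℕ) (W : Submodule ℝ 𝒱) : Prop :=
  W ≤ lOrth ω l W

/-- A subspace `W` is `l`-lagrangian if it is `l`-isotropic and admits an `l`-isotropic
complement `U`, i.e. `𝒱 = U ⊕ W`. -/
def IsLagrangian {k : ℕ} {𝒱 : Type*} [AddCommGroup 𝒱] [Module ℝ 𝒱]
    (ω : Fin k → 𝒱 →ₗ[ℝ] 𝒱 →ₗ[ℝ] ℝ) (l : ℕ) (W : Submodule ℝ 𝒱) : Prop :=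
  IsIsotropic ω l W ∧ ∃ U : Submodule ℝ 𝒱, IsIsotropic ω l U ∧ IsCompl U W


theorem stmt12 {n k : ℕ} {𝒱 : Type*} [AddCommGroup 𝒱] [Module ℝ 𝒱] [FiniteDimensional ℝ 𝒱]
    (hdim : finrank ℝ 𝒱 = n * (k + 1))
    (ω : Fin k → 𝒱 →ₗ[ℝ] 𝒱 →ₗ[ℝ] ℝ)
    (halt : ∀ (r : Fin k) (v : 𝒱), ω r v v = 0)
    (hnd : ∀ v : 𝒱, (∀ (r : Fin k) (w : 𝒱), ω r v w = 0) → v = 0)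
    (W : Submodule ℝ 𝒱) (hW : IsLagrangian ω k W) :
    W = lOrth ω k W := by
  obtain ⟨hWiso, U, hUiso, hcompl⟩ := hW
  refine le_antisymm hWiso ?_
  intro v hv
  have hvmem : v ∈ U ⊔ W := by rw [hcompl.sup_eq_top]; trivial
  obtain ⟨u, hu, w, hw, huw⟩ := Submodule.mem_sup.mp hvmem
  have hu0 : u = 0 := by
    apply hnd
    intro r x
    have hxmem : x ∈ U ⊔ W := by rw [hcompl.sup_eq_top]; trivial
    obtain ⟨u', hu', w', hw', rfl⟩ := Submodule.mem_sup.mp hxmem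
    have h1 : ω r u u' = 0 := hUiso hu r r.isLt u' hu'
    have h2 : ω r u w' = 0 := by
      have huvw : u = v - w := by rw [← huw]; abel
      have hv' : ω r v w' = 0 := hv r r.isLt w' hw'
      have hw'' : ω r w w' = 0 := hWiso hw r r.isLt w' hw'
      rw [huvw]; simp [map_sub, hv', hw'']
    simp [map_add, h1, h2]
  rw [← huw, hu0, zero_add]
  exact hw
end

section
/- Let (𝒱, ω₁, …, ω_k) be a k-symplectic vector space and let U, V be k-lagrangian linear subspaces of 𝒱 with U ⊆ V. Then U = V; i.e. every k-lagrangian subspace is maximal among k-lagrangian subspaces. -/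
open Module

theorem stmt14 {n k : ℕ} {𝒱 : Type*} [AddCommGroup 𝒱] [Module ℝ 𝒱] [FiniteDimensional ℝ 𝒱]
    (hdim : finrank ℝ 𝒱 = n * (k + 1))
    (ω : Fin k → 𝒱 →ₗ[ℝ] 𝒱 →ₗ[ℝ] ℝ)
    (halt : ∀ (r : Fin k) (v : 𝒱), ω r v v = 0)
    (hnd : ∀ v : 𝒱, (∀ (r : Fin k) (w : 𝒱), ω r v w = 0) → v = 0)
    (U V : Submodule ℝ 𝒱) (hU : IsLagrangian ω k U) (hV : IsLagrangian ω k V)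
    (hUV : U ≤ V) :
    U = V := by
  obtain ⟨hUi, U', hU'i, hc⟩ := hU
  obtain ⟨hVi, -⟩ := hV
  refine le_antisymm hUV ?_
  intro v hv
  have hvmem : v ∈ U' ⊔ U := by rw [hc.sup_eq_top]; trivial
  obtain ⟨u', hu', u, hu, hsum⟩ := Submodule.mem_sup.mp hvmem
  suffices h : u' = 0 by rw [← hsum, h, zero_add]; exact hu
  apply hnd
  intro r w
  have hwmem : w ∈ U' ⊔ U := by rw [hc.sup_eq_top]; trivial
  obtain ⟨w', hw', w'', hw'', rfl⟩ := Submodule.mem_sup.mp hwmem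
  have h1 : ω r u' w' = 0 := hU'i hu' r r.isLt w' hw'
  have hu'eq : u' = v - u := by rw [← hsum]; abel
  have h2 : ω r u' w'' = 0 := by
    rw [hu'eq, map_sub, LinearMap.sub_apply,
      hVi hv r r.isLt w'' (hUV hw''), hUi hu r r.isLt w'' hw'', sub_zero]
  rw [map_add, h1, h2, add_zero]
end

section
/- Let (𝒱₁, ω¹₁, …, ω¹_k) and (𝒱₂, ω²₁, …, ω²_k) be k-symplectic vector spaces and let φ : 𝒱₁ → 𝒱₂ be a linear isomorphism. Then φ is a k-symplectomorphism (i.e. ω²_r(φ(u), φ(v)) = ω¹_r(u,v) for all u, v ∈ 𝒱₁ and all r ∈ {1,…,k}) if and only if its graph Γ_φ = {(v, φ(v)) : v ∈ 𝒱₁} is a k-lagrangian subspace of the product k-symplectic vector space (𝒱₁ × 𝒱₂, ω¹₁ ⊖ ω²₁, …, ω¹_k ⊖ ω²_k), where (ω¹_r ⊖ ω²_r)((x₁,x₂),(y₁,y₂)) = ω¹_r(x₁,y₁) − ω²_r(x₂,y₂). -/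
open Module

/-- The canonical `k`-symplectic forms on `V × (V* × ⋯ × V*)`:
`ω^V_r ((v,α),(w,β)) = β_r(v) - α_r(w)`. -/
def canForm (k : ℕ) (V : Type*) [AddCommGroup V] [Module ℝ V] (r : Fin k) :
    (V × (Fin k → Module.Dual ℝ V)) →ₗ[ℝ] (V × (Fin k → Module.Dual ℝ V)) →ₗ[ℝ] ℝ :=
  LinearMap.mk₂ ℝ (fun p q => q.2 r p.1 - p.2 r q.1)
    (fun p p' q => by simp; ring)
    (fun c p q => by simp; ring)
    (fun p q q' => by simp; ring)
    (fun c p q => by simp; ring)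

/-- The difference form `ω¹_r ⊖ ω²_r` on the product `V₁ × V₂`. -/
def ominus {k : ℕ} {V₁ V₂ : Type*} [AddCommGroup V₁] [Module ℝ V₁]
    [AddCommGroup V₂] [Module ℝ V₂]
    (ω₁ : Fin k → V₁ →ₗ[ℝ] V₁ →ₗ[ℝ] ℝ) (ω₂ : Fin k → V₂ →ₗ[ℝ] V₂ →ₗ[ℝ] ℝ) (r : Fin k) :
    (V₁ × V₂) →ₗ[ℝ] (V₁ × V₂) →ₗ[ℝ] ℝ :=
  LinearMap.mk₂ ℝ (fun p q => ω₁ r p.1 q.1 - ω₂ r p.2 q.2)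
    (fun p p' q => by simp; ring)
    (fun c p q => by simp; ring)
    (fun p q q' => by simp; ring)
    (fun c p q => by simp; ring)

theorem stmt18 {n₁ n₂ k : ℕ} {𝒱₁ 𝒱₂ : Type*}
    [AddCommGroup 𝒱₁] [Module ℝ 𝒱₁] [FiniteDimensional ℝ 𝒱₁]
    [AddCommGroup 𝒱₂] [Module ℝ 𝒱₂] [FiniteDimensional ℝ 𝒱₂]
    (hdim₁ : finrank ℝ 𝒱₁ = n₁ * (k + 1)) (hdim₂ : finrank ℝ 𝒱₂ = n₂ * (k + 1))
    (ω₁ : Fin k → 𝒱₁ →ₗ[ℝ] 𝒱₁ →ₗ[ℝ] ℝ) (ω₂ : Fin k → 𝒱₂ →ₗ[ℝ] 𝒱₂ →ₗ[ℝ] ℝ)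
    (halt₁ : ∀ (r : Fin k) (v : 𝒱₁), ω₁ r v v = 0)
    (hnd₁ : ∀ v : 𝒱₁, (∀ (r : Fin k) (w : 𝒱₁), ω₁ r v w = 0) → v = 0)
    (halt₂ : ∀ (r : Fin k) (v : 𝒱₂), ω₂ r v v = 0)
    (hnd₂ : ∀ v : 𝒱₂, (∀ (r : Fin k) (w : 𝒱₂), ω₂ r v w = 0) → v = 0)
    (φ : 𝒱₁ ≃ₗ[ℝ] 𝒱₂) :
    (∀ (r : Fin k) (u v : 𝒱₁), ω₂ r (φ u) (φ v) = ω₁ r u v) ↔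
      IsLagrangian (ominus ω₁ ω₂) k (LinearMap.graph (φ : 𝒱₁ →ₗ[ℝ] 𝒱₂)) := by
  constructor
  · intro h
    constructor
    · intro p hp r hr q hq
      rw [LinearMap.mem_graph_iff] at hp hq
      simp [ominus, hp, hq, h]
    · refine ⟨LinearMap.graph (-(φ : 𝒱₁ →ₗ[ℝ] 𝒱₂)), ?_, ?_, ?_⟩
      · intro p hp r hr q hq
        rw [LinearMap.mem_graph_iff] at hp hq
        simp [ominus, hp, hq, h]
      · rw [disjoint_iff_inf_le]
        rintro ⟨x, y⟩ ⟨h1, h2⟩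
        rw [SetLike.mem_coe, LinearMap.mem_graph_iff] at h1 h2
        dsimp only at h1 h2
        simp only [LinearMap.neg_apply] at h1
        have hx : φ x = 0 := by
          have : (2 : ℝ) • (φ x) = 0 := by
            rw [two_smul]
            rw [h2] at h1
            linear_combination (norm := module) h1
          simpa using this
        have hx0 : x = 0 := by
          have := φ.injective (by simpa using hx)
          simpa using this
        have hy0 : y = 0 := by rw [h2, hx0]; simp
        simp [hx0, hy0, Submodule.mem_bot, Prod.ext_iff]
      · rw [codisjoint_iff_le_sup]
        rintro ⟨x, y⟩ -
        rw [Submodule.mem_sup]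
        refine ⟨((1/2 : ℝ) • (x - φ.symm y), -(φ ((1/2 : ℝ) • (x - φ.symm y)))),
          ((LinearMap.mem_graph_iff _ _).mpr (by simp; module)), ((1/2 : ℝ) • (x + φ.symm y),
          φ ((1/2 : ℝ) • (x + φ.symm y))), (LinearMap.mem_graph_iff _ _).mpr rfl, ?_⟩
        have h1 : (1/2 : ℝ) • (x - φ.symm y) + (1/2 : ℝ) • (x + φ.symm y) = x := by
          module
        have h2 : -(φ ((1/2 : ℝ) • (x - φ.symm y))) + φ ((1/2 : ℝ) • (x + φ.symm y)) = y := by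
          rw [← map_neg, ← map_add]
          have : -((1/2 : ℝ) • (x - φ.symm y)) + (1/2 : ℝ) • (x + φ.symm y) = φ.symm y := by
            module
          rw [this]; simp
        exact Prod.ext h1 h2
  · rintro ⟨hiso, -⟩ r u v
    have := hiso ((LinearMap.mem_graph_iff _ _).mpr rfl : ((u, φ u) : 𝒱₁ × 𝒱₂) ∈ _) r r.isLt
      (v, φ v) ((LinearMap.mem_graph_iff _ _).mpr rfl)
    simp only [ominus, LinearMap.mk₂_apply] at this
    linarith
end

section
/- Let (𝒱, ω₁, …, ω_k) be a finite-dimensional k-symplectic vector space. Then there exists a finite-dimensional real vector space V and a linear isomorphism ψ : 𝒱 → V × V* × ⋯ × V* (k copies of V*) satisfying ψ*ω^V_r = ω_r for all r ∈ {1,…,k}, where ω^V_r((v, α₁, …, α_k), (w, β₁, …, β_k)) = β_r(v) − α_r(w) are the canonical forms, if and only if there exists a k-lagrangian subspace W of 𝒱 such that dim W = k · dim(𝒱/W). -/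
open Module

private lemma skew {k : ℕ} {𝒱 : Type*} [AddCommGroup 𝒱] [Module ℝ 𝒱]
    (ω : Fin k → 𝒱 →ₗ[ℝ] 𝒱 →ₗ[ℝ] ℝ) (halt : ∀ (r : Fin k) (v : 𝒱), ω r v v = 0)
    (r : Fin k) (a b : 𝒱) : ω r a b = - ω r b a := by
  have h := halt r (a + b)
  simp only [map_add, LinearMap.add_apply, halt r a, halt r b] at h
  linarith

theorem stmt19 {n k : ℕ} {𝒱 : Type*} [AddCommGroup 𝒱] [Module ℝ 𝒱] [FiniteDimensional ℝ 𝒱]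
    (hdim : finrank ℝ 𝒱 = n * (k + 1))
    (ω : Fin k → 𝒱 →ₗ[ℝ] 𝒱 →ₗ[ℝ] ℝ)
    (halt : ∀ (r : Fin k) (v : 𝒱), ω r v v = 0)
    (hnd : ∀ v : 𝒱, (∀ (r : Fin k) (w : 𝒱), ω r v w = 0) → v = 0) :
    (∃ (V : Type) (_ : AddCommGroup V) (_ : Module ℝ V) (_ : FiniteDimensional ℝ V)
        (ψ : 𝒱 ≃ₗ[ℝ] V × (Fin k → Module.Dual ℝ V)),
        ∀ (r : Fin k) (x y : 𝒱), canForm k V r (ψ x) (ψ y) = ω r x y) ↔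
      ∃ W : Submodule ℝ 𝒱, IsLagrangian ω k W ∧
        finrank ℝ W = k * finrank ℝ (𝒱 ⧸ W) := by
  constructor
  · rintro ⟨V, _, _, _, ψ, hψ⟩
    set W : Submodule ℝ 𝒱 :=
      Submodule.comap (ψ : 𝒱 →ₗ[ℝ] V × (Fin k → Dual ℝ V))
        (LinearMap.range (LinearMap.inr ℝ V (Fin k → Dual ℝ V))) with hW
    set U : Submodule ℝ 𝒱 :=
      Submodule.comap (ψ : 𝒱 →ₗ[ℝ] V × (Fin k → Dual ℝ V))
        (LinearMap.range (LinearMap.inl ℝ V (Fin k → Dual ℝ V))) with hU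
    have hWmem : ∀ x : 𝒱, x ∈ W ↔ (ψ x).1 = 0 := by
      intro x
      simp [hW, LinearMap.range_inr, Submodule.mem_comap, LinearMap.mem_ker]
    have hUmem : ∀ x : 𝒱, x ∈ U ↔ (ψ x).2 = 0 := by
      intro x
      simp [hU, LinearMap.range_inl, Submodule.mem_comap, LinearMap.mem_ker]
    have hform : ∀ (r : Fin k) (x y : 𝒱),
        ω r x y = (ψ y).2 r (ψ x).1 - (ψ x).2 r (ψ y).1 := by
      intro r x y
      rw [← hψ r x y]
      simp [canForm]
    have hcompl : IsCompl U W := by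
      constructor
      · rw [disjoint_iff, eq_bot_iff]
        intro x hx
        obtain ⟨h1, h2⟩ := Submodule.mem_inf.mp hx
        have hz : ψ x = 0 := Prod.ext ((hWmem x).mp h2) ((hUmem x).mp h1)
        simpa using ψ.map_eq_zero_iff.mp hz
      · rw [codisjoint_iff, eq_top_iff]
        intro x _
        have hx : x = ψ.symm ((ψ x).1, 0) + ψ.symm (0, (ψ x).2) := by
          rw [← map_add, Prod.mk_add_mk, add_zero, zero_add]
          simp
        rw [hx]
        refine Submodule.add_mem_sup ?_ ?_
        · rw [hUmem]; simp
        · rw [hWmem]; simp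
    refine ⟨W, ⟨?_, U, ?_, hcompl⟩, ?_⟩
    · intro x hx r _ w hw
      rw [hform r x w, (hWmem x).mp hx, (hWmem w).mp hw]
      simp
    · intro x hx r _ w hw
      rw [hform r x w, (hUmem x).mp hx, (hUmem w).mp hw]
      simp
    · have eW : (↥W) ≃ₗ[ℝ] (Fin k → Dual ℝ V) :=
        (LinearEquiv.ofSubmodule' ψ _).trans
          (LinearEquiv.ofInjective (LinearMap.inr ℝ V (Fin k → Dual ℝ V))
            LinearMap.inr_injective).symm
      have eU : (↥U) ≃ₗ[ℝ] V :=
        (LinearEquiv.ofSubmodule' ψ _).trans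
          (LinearEquiv.ofInjective (LinearMap.inl ℝ V (Fin k → Dual ℝ V))
            LinearMap.inl_injective).symm
      have eQ : (𝒱 ⧸ W) ≃ₗ[ℝ] ↥U := Submodule.quotientEquivOfIsCompl W U hcompl.symm
      rw [eW.finrank_eq, eQ.finrank_eq, eU.finrank_eq]
      rw [Module.finrank_pi_fintype]
      simp [Subspace.dual_finrank_eq, Finset.sum_const, mul_comm]
  · rintro ⟨W, ⟨hWiso, U, hUiso, hcompl⟩, hdim'⟩
    have hsk := skew ω halt
    -- the pairing map W → (Fin k → Dual ℝ U)
    set φ : (↥W) →ₗ[ℝ] (Fin k → Dual ℝ ↥U) :=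
      LinearMap.pi (fun r => (LinearMap.lcomp ℝ ℝ U.subtype).comp
        (((ω r).flip).comp W.subtype)) with hφ
    have hφapp : ∀ (w : ↥W) (r : Fin k) (u : ↥U), φ w r u = ω r ↑u ↑w := by
      intro w r u; simp [hφ, LinearMap.pi_apply]
    have hφinj : Function.Injective φ := by
      rw [← LinearMap.ker_eq_bot, LinearMap.ker_eq_bot']
      intro w hw
      have hw0 : (w : 𝒱) = 0 := by
        apply hnd
        intro r v
        obtain ⟨⟨u, w'⟩, hv⟩ := (Submodule.prodEquivOfIsCompl U W hcompl).surjective v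
        have hv' : v = ↑u + ↑w' := by
          rw [← hv]; simp [Submodule.coe_prodEquivOfIsCompl]
        have h1 : ω r ↑w ↑w' = 0 := hWiso w.2 r r.isLt ↑w' w'.2
        have h2 : ω r (↑u : 𝒱) ↑w = 0 := by
          have h := hφapp w r u
          rw [hw] at h
          simpa using h.symm
        have h3 : ω r (↑w : 𝒱) ↑u = 0 := by rw [hsk r ↑w ↑u, h2]; ring
        rw [hv', map_add, h3, h1]; ring
      exact Subtype.ext hw0
    have hfr : finrank ℝ (↥W) = finrank ℝ (Fin k → Dual ℝ ↥U) := by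
      have eQ : (𝒱 ⧸ W) ≃ₗ[ℝ] ↥U := Submodule.quotientEquivOfIsCompl W U hcompl.symm
      rw [hdim', eQ.finrank_eq, Module.finrank_pi_fintype]
      simp [Subspace.dual_finrank_eq, Finset.sum_const, mul_comm]
    obtain ⟨φe, hφe⟩ : ∃ g : (↥W) ≃ₗ[ℝ] (Fin k → Dual ℝ ↥U), ∀ w, g w = φ w :=
      ⟨LinearMap.linearEquivOfInjective φ hφinj hfr,
        fun w => LinearMap.linearEquivOfInjective_apply hφinj hfr w⟩
    set d := finrank ℝ (↥U) with hd
    set e : (↥U) ≃ₗ[ℝ] (Fin d → ℝ) := (Module.finBasis ℝ (↥U)).equivFun with he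
    refine ⟨Fin d → ℝ, inferInstance, inferInstance, inferInstance,
      (Submodule.prodEquivOfIsCompl U W hcompl).symm ≪≫ₗ
        ((LinearEquiv.refl ℝ (↥U)).prodCongr φe) ≪≫ₗ
        (e.prodCongr (LinearEquiv.piCongrRight fun _ => e.symm.dualMap)), ?_⟩
    intro r x y
    set P := Submodule.prodEquivOfIsCompl U W hcompl with hP
    obtain ⟨⟨u, w⟩, hx⟩ := P.surjective x
    obtain ⟨⟨u', w'⟩, hy⟩ := P.surjective y
    have hx' : x = ↑u + ↑w := by rw [← hx]; simp [hP, Submodule.coe_prodEquivOfIsCompl]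
    have hy' : y = ↑u' + ↑w' := by rw [← hy]; simp [hP, Submodule.coe_prodEquivOfIsCompl]
    have hPsx : P.symm x = (u, w) := by rw [← hx]; exact P.symm_apply_apply _
    have hPsy : P.symm y = (u', w') := by rw [← hy]; exact P.symm_apply_apply _
    have lhs_eq : canForm k (Fin d → ℝ) r
        (((P.symm ≪≫ₗ ((LinearEquiv.refl ℝ (↥U)).prodCongr φe) ≪≫ₗ
          (e.prodCongr (LinearEquiv.piCongrRight fun _ => e.symm.dualMap)))) x)
        (((P.symm ≪≫ₗ ((LinearEquiv.refl ℝ (↥U)).prodCongr φe) ≪≫ₗ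
          (e.prodCongr (LinearEquiv.piCongrRight fun _ => e.symm.dualMap)))) y)
        = ω r ↑u ↑w' - ω r ↑u' ↑w := by
      simp [canForm, hPsx, hPsy, LinearEquiv.prodCongr_apply, hφe, hφapp,
        LinearEquiv.dualMap_apply]
    rw [lhs_eq, hx', hy']
    have h1 : ω r (↑u : 𝒱) ↑u' = 0 := hUiso u.2 r r.isLt ↑u' u'.2
    have h2 : ω r (↑w : 𝒱) ↑w' = 0 := hWiso w.2 r r.isLt ↑w' w'.2
    have h3 : ω r (↑w : 𝒱) ↑u' = - ω r ↑u' ↑w := hsk r ↑w ↑u'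
    simp only [map_add, LinearMap.add_apply, h1, h2, h3]
    ring
end
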